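/- arXiv:2304.13177 — 3 statements merged into one kernel-verified Lean document; each statement's English description precedes it below -/
import Mathlib

section
/- Let {Ψₙ}ₙ≥₁ be an orthonormal family in L²(-ℓ,ℓ) of the form Ψₙ(x) = Pₙ(x)eˣ with deg Pₙ = n-1 and leading coefficients nonzero. Then for the matrix S_N with entries sₘₙ = ⟨Ψₙ', Ψₘ⟩, one has sₙₙ = 1 and sₘₙ = 0 for n < m; in particular S_N is upper triangular with det(S_N) = 1 and hence invertible for every N. -/
theorem fourier_klibanov_matrix_triangular
    (ℓ : ℝ) (hℓ : 0 < ℓ)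
    (P : ℕ → Polynomial ℝ) (hdeg : ∀ n, (P n).degree = n)
    (Ψ : ℕ → ℝ → ℝ)
    (hΨ : ∀ n x, Ψ n x = (P n).eval x * Real.exp x)
    (horth : ∀ m n, (∫ x in (-ℓ)..ℓ, Ψ m x * Ψ n x) = if m = n then 1 else 0)
    (s : ℕ → ℕ → ℝ)
    (hs : ∀ m n, s m n = ∫ x in (-ℓ)..ℓ, deriv (Ψ n) x * Ψ m x) :
    (∀ n, s n n = 1) ∧ (∀ m n, n < m → s m n = 0) ∧
      ∀ N : ℕ,
        (Matrix.of fun m n : Fin N => s m n).det = 1 ∧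
        IsUnit (Matrix.of fun m n : Fin N => s m n) := by
  -- continuity / integrability helper
  have hint : ∀ (q r : Polynomial ℝ), IntervalIntegrable
      (fun x => q.eval x * Real.exp x * (r.eval x * Real.exp x)) MeasureTheory.volume (-ℓ) ℓ := by
    intro q r
    exact (((q.continuous).mul Real.continuous_exp).mul
      ((r.continuous).mul Real.continuous_exp)).intervalIntegrable _ _
  -- key vanishing lemma
  have key : ∀ n : ℕ, ∀ q : Polynomial ℝ, q.degree < (n : WithBot ℕ) → ∀ m, n ≤ m →
      (∫ x in (-ℓ)..ℓ, q.eval x * Real.exp x * Ψ m x) = 0 := by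
    intro n
    induction n with
    | zero =>
      intro q hq m _
      have : q = 0 := by
        have h0 : q.degree < 0 := by exact_mod_cast hq
        exact Polynomial.degree_eq_bot.mp (Nat.WithBot.lt_zero_iff.mp h0)
      simp [this]
    | succ n ih =>
      intro q hq m hm
      by_cases hq0 : q = 0
      · simp [hq0]
      · set d := q.natDegree with hd
        have hqd : q.degree = (d : WithBot ℕ) := Polynomial.degree_eq_natDegree hq0
        have hdn : d ≤ n := by
          have : (d : WithBot ℕ) < ((n + 1 : ℕ) : WithBot ℕ) := hqd ▸ hq
          exact Nat.lt_succ_iff.mp (by exact_mod_cast this)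
        have hPd0 : P d ≠ 0 := by
          intro h
          have := hdeg d
          rw [h] at this
          simp [Polynomial.degree_zero] at this
        have hlc : (P d).leadingCoeff ≠ 0 := Polynomial.leadingCoeff_ne_zero.mpr hPd0
        set c := q.leadingCoeff / (P d).leadingCoeff with hc
        have hc0 : c ≠ 0 := div_ne_zero (Polynomial.leadingCoeff_ne_zero.mpr hq0) hlc
        set q' := q - c • P d with hq'
        have hdegc : (c • P d).degree = (d : WithBot ℕ) := by
          rw [Polynomial.smul_eq_C_mul, Polynomial.degree_C_mul hc0, hdeg d]
        have hlceq : q.leadingCoeff = (c • P d).leadingCoeff := by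
          rw [Polynomial.smul_eq_C_mul, Polynomial.leadingCoeff_mul, Polynomial.leadingCoeff_C, hc]
          exact (div_mul_cancel₀ _ hlc).symm
        have hq'deg : q'.degree < (d : WithBot ℕ) := by
          have h := Polynomial.degree_sub_lt (hqd.trans hdegc.symm) hq0 hlceq
          rw [hqd] at h
          exact h
        have hq'lt : q'.degree < (n : WithBot ℕ) ∨ q'.degree < (d : WithBot ℕ) := Or.inr hq'deg
        have hih : (∫ x in (-ℓ)..ℓ, q'.eval x * Real.exp x * Ψ m x) = 0 := by
          apply ih q' _ m (le_trans (Nat.le_succ n) hm)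
          calc q'.degree < (d : WithBot ℕ) := hq'deg
            _ ≤ (n : WithBot ℕ) := by exact_mod_cast hdn
        have hd_m : d ≠ m := by omega
        have hPdint : (∫ x in (-ℓ)..ℓ, (P d).eval x * Real.exp x * Ψ m x) = 0 := by
          have := horth d m
          simp only [hΨ] at this ⊢
          rw [this]
          simp [hd_m]
        have hsplit : q = q' + c • P d := by ring
        calc (∫ x in (-ℓ)..ℓ, q.eval x * Real.exp x * Ψ m x)
            = ∫ x in (-ℓ)..ℓ, (q'.eval x * Real.exp x * Ψ m x
                + c * ((P d).eval x * Real.exp x * Ψ m x)) := by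
              congr 1; funext x
              rw [hsplit]
              simp [Polynomial.eval_add, Polynomial.eval_smul]
              ring
          _ = (∫ x in (-ℓ)..ℓ, q'.eval x * Real.exp x * Ψ m x)
                + c * ∫ x in (-ℓ)..ℓ, (P d).eval x * Real.exp x * Ψ m x := by
              rw [intervalIntegral.integral_add, intervalIntegral.integral_const_mul]
              · simp only [hΨ]; exact hint q' (P m)
              · apply IntervalIntegrable.const_mul
                simp only [hΨ]; exact hint (P d) (P m)
          _ = 0 := by rw [hih, hPdint]; ring
  -- derivative of Ψ n
  have hΨfun : ∀ n, Ψ n = fun x => (P n).eval x * Real.exp x := fun n => funext (hΨ n)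
  have hderiv : ∀ n x, deriv (Ψ n) x = Ψ n x + (P n).derivative.eval x * Real.exp x := by
    intro n x
    have h1 : HasDerivAt (fun x => (P n).eval x * Real.exp x)
        ((P n).derivative.eval x * Real.exp x + (P n).eval x * Real.exp x) x :=
      ((P n).hasDerivAt x).mul (Real.hasDerivAt_exp x)
    rw [hΨfun n, h1.deriv]
    ring
  have hPne : ∀ n, P n ≠ 0 := by
    intro n h
    have := hdeg n
    rw [h] at this
    simp [Polynomial.degree_zero] at this
  have hderlt : ∀ n : ℕ, (P n).derivative.degree < (n : WithBot ℕ) := by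
    intro n
    have := Polynomial.degree_derivative_lt (hPne n)
    rwa [hdeg n] at this
  -- main computation of s
  have hsval : ∀ m n, s m n = (if n = m then (1:ℝ) else 0)
      + ∫ x in (-ℓ)..ℓ, (P n).derivative.eval x * Real.exp x * Ψ m x := by
    intro m n
    rw [hs m n]
    calc (∫ x in (-ℓ)..ℓ, deriv (Ψ n) x * Ψ m x)
        = ∫ x in (-ℓ)..ℓ, (Ψ n x * Ψ m x
            + (P n).derivative.eval x * Real.exp x * Ψ m x) := by
          congr 1; funext x; rw [hderiv]; ring
      _ = (∫ x in (-ℓ)..ℓ, Ψ n x * Ψ m x)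
            + ∫ x in (-ℓ)..ℓ, (P n).derivative.eval x * Real.exp x * Ψ m x := by
          rw [intervalIntegral.integral_add]
          · simp only [hΨ]; exact hint (P n) (P m)
          · simp only [hΨ]; exact hint (P n).derivative (P m)
      _ = _ := by rw [horth n m]
  have h1 : ∀ n, s n n = 1 := by
    intro n
    rw [hsval n n, key n (P n).derivative (hderlt n) n le_rfl]
    simp
  have h2 : ∀ m n, n < m → s m n = 0 := by
    intro m n hnm
    rw [hsval m n, key n (P n).derivative (hderlt n) m (le_of_lt hnm)]
    simp [Nat.ne_of_lt hnm]
  refine ⟨h1, h2, fun N => ?_⟩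
  have hupper : (Matrix.of fun m n : Fin N => s m n).BlockTriangular id := by
    intro i j hij
    exact h2 i j hij
  have hdet : (Matrix.of fun m n : Fin N => s m n).det = 1 := by
    rw [Matrix.det_of_upperTriangular hupper]
    simp [h1]
  exact ⟨hdet, (Matrix.isUnit_iff_isUnit_det _).mpr (by rw [hdet]; exact isUnit_one)⟩
end

section
/- (Discrete Gronwall–Bellman–Ou-Iang type bound) Let (xⱼ)ⱼ≥₀ be nonnegative reals and C > 0, pⱼ ≥ 0 with xⱼ ≤ C + ∑_{i<j} pᵢ(xᵢ + xᵢ²) for all j. If ∑_{i<j} pᵢ ≤ ln((C+1)/(C+1/2)) for all j, then xⱼ ≤ 2C for all j. -/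
/-!
Put `S j = C + ∑_{i<j} pᵢ (xᵢ + xᵢ²)`, so that `0 ≤ xⱼ ≤ Sⱼ` and
`S_{n+1} ≤ Sₙ (1 + pₙ (1 + Sₙ))`. The Möbius map `s ↦ s / (s + 1)` turns this quadratic
growth into linear growth: `S_{n+1} / (S_{n+1} + 1) ≤ Sₙ / (Sₙ + 1) · (1 + pₙ)`. Hence
`Sⱼ / (Sⱼ + 1) ≤ C / (C + 1) · exp (∑_{i<j} pᵢ) ≤ C / (C + 1/2)`, i.e. `Sⱼ ≤ 2C`.
-/

open Finset Real

lemma div_add_one_le_div_add_one {s t : ℝ} (hs : 0 ≤ s) (hst : s ≤ t) :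
    s / (s + 1) ≤ t / (t + 1) := by
  rw [div_le_div_iff₀ (by linarith) (by linarith)]
  linarith

lemma div_add_one_le_mul_exp_of_le_add_mul {s t q : ℝ} (hs : 0 ≤ s) (ht : 0 ≤ t) (hq : 0 ≤ q)
    (hst : t ≤ s + q * (s + s ^ 2)) :
    t / (t + 1) ≤ s / (s + 1) * exp q := by
  set u := s + q * (s + s ^ 2)
  have hsu : s ≤ u := le_add_of_nonneg_right (by positivity)
  calc t / (t + 1) ≤ u / (u + 1) := div_add_one_le_div_add_one ht hst
    _ ≤ s / (s + 1) * (1 + q) := by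
        rw [div_mul_eq_mul_div, div_le_div_iff₀ (by linarith) (by linarith)]
        nlinarith [mul_le_mul_of_nonneg_left hsu (mul_nonneg hq hs)]
    _ ≤ s / (s + 1) * exp q := by
        gcongr
        linarith [add_one_le_exp q]

lemma div_add_one_le_mul_exp_sum {S p : ℕ → ℝ} (hS : ∀ n, 0 ≤ S n) (hp : ∀ n, 0 ≤ p n)
    (hstep : ∀ n, S (n + 1) ≤ S n + p n * (S n + S n ^ 2)) (n : ℕ) :
    S n / (S n + 1) ≤ S 0 / (S 0 + 1) * exp (∑ i ∈ range n, p i) := by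
  induction n with
  | zero => simp
  | succ n ih =>
    calc S (n + 1) / (S (n + 1) + 1) ≤ S n / (S n + 1) * exp (p n) :=
          div_add_one_le_mul_exp_of_le_add_mul (hS n) (hS (n + 1)) (hp n) (hstep n)
      _ ≤ S 0 / (S 0 + 1) * exp (∑ i ∈ range n, p i) * exp (p n) := by gcongr
      _ = S 0 / (S 0 + 1) * exp (∑ i ∈ range (n + 1), p i) := by
          rw [sum_range_succ, exp_add, mul_assoc]

lemma le_two_mul_of_div_add_one_le {s C : ℝ} (hs : 0 ≤ s) (hC : 0 ≤ C)
    (h : s / (s + 1) ≤ C / (C + 1 / 2)) : s ≤ 2 * C := by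
  rw [div_le_div_iff₀ (by linarith) (by linarith)] at h
  linarith

theorem discrete_gronwall_bellman_ou_iang_general
    (x p : ℕ → ℝ) (C : ℝ)
    (hx : ∀ j, 0 ≤ x j) (hp : ∀ i, 0 ≤ p i)
    (hrec : ∀ j, x j ≤ C + ∑ i ∈ Finset.range j, p i * (x i + x i ^ 2))
    (hsum : ∀ j, (∑ i ∈ Finset.range j, p i) ≤ Real.log ((C + 1) / (C + 1 / 2))) :
    ∀ j, x j ≤ 2 * C := by
  set S : ℕ → ℝ := fun j => C + ∑ i ∈ range j, p i * (x i + x i ^ 2)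
  have hS : ∀ j, 0 ≤ S j := fun j => (hx j).trans (hrec j)
  have hstep : ∀ n, S (n + 1) ≤ S n + p n * (S n + S n ^ 2) := fun n => by
    have hxS : x n + x n ^ 2 ≤ S n + S n ^ 2 :=
      add_le_add (hrec n) (pow_le_pow_left₀ (hx n) (hrec n) 2)
    calc S (n + 1) = S n + p n * (x n + x n ^ 2) := by simp only [S, sum_range_succ]; ring
      _ ≤ S n + p n * (S n + S n ^ 2) := by gcongr; exact hp n
  have hC : 0 ≤ C := by simpa [S] using hS 0
  intro j
  have hexp : exp (∑ i ∈ range j, p i) ≤ (C + 1) / (C + 1 / 2) :=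
    (exp_le_exp.mpr (hsum j)).trans_eq (exp_log (by positivity))
  have hratio : S j / (S j + 1) ≤ C / (C + 1 / 2) :=
    calc S j / (S j + 1) ≤ C / (C + 1) * exp (∑ i ∈ range j, p i) := by
          simpa [S] using div_add_one_le_mul_exp_sum hS hp hstep j
      _ ≤ C / (C + 1) * ((C + 1) / (C + 1 / 2)) := by gcongr
      _ = C / (C + 1 / 2) := by field_simp
  exact (hrec j).trans (le_two_mul_of_div_add_one_le (hS j) hC hratio)

theorem discrete_gronwall_bellman_ou_iang
    (x p : ℕ → ℝ) (C : ℝ) (hC : 0 < C)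
    (hx : ∀ j, 0 ≤ x j) (hp : ∀ i, 0 ≤ p i)
    (hrec : ∀ j, x j ≤ C + ∑ i ∈ Finset.range j, p i * (x i + x i ^ 2))
    (hsum : ∀ j, (∑ i ∈ Finset.range j, p i) ≤ Real.log ((C + 1) / (C + 1 / 2))) :
    ∀ j, x j ≤ 2 * C :=
  discrete_gronwall_bellman_ou_iang_general x p C hx hp hrec hsum
end

section
/- Stability of the explicit Fourier–Klibanov scheme: let Vⱼⁱ ∈ ℝ^N satisfy Vⱼⁱ = V₀^{i-j} + Δt · S⁻¹ ∑_{𝔦=0}^{j-1} F(V_𝔦^{𝔦+i-j}) for i ≥ j ≥ 1, where F(V)ₘ = (KV)ₘ + VᵀGₘV with |K|_F + ∑ₘ|Gₘ|_F ≤ P for all steps, and |V₀ⁱ|₂ ≤ C, |Vⱼ⁰|₂ ≤ C. If Δt|S⁻¹|_F · (total sum of the P's) ≤ ln((C+1)/(C+1/2)), then |Vⱼⁱ|₂ ≤ 2C for all i ≥ j ≥ 0. -/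
/-!
Fix a characteristic `i - j = d` and put `xₖ = |V^{k+d}_k|₂`. Bounding the quadratic
nonlinearity by `P (x + x²)`, the scheme gives `xₖ ≤ C + ∑_{l<k} qₗ (xₗ + xₗ²)` with
`qₗ = Δt |S⁻¹|_F P`. For the majorant `u` of the right-hand side, `u/(1+u)` grows at most by
the factor `1 + qₖ ≤ exp qₖ` per step (Ou-Iang), so `x/(1+x) ≤ C/(C+1) · (C+1)/(C+1/2)`,
which is `x ≤ 2C`.
-/

open Matrix

noncomputable def vecNorm2 {N : ℕ} (X : Fin N → ℝ) : ℝ :=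
  Real.sqrt (∑ n, X n ^ 2)

noncomputable def frobNorm {N : ℕ} (G : Matrix (Fin N) (Fin N) ℝ) : ℝ :=
  Real.sqrt (∑ m, ∑ n, G m n ^ 2)

section EuclideanBounds

open WithLp
open scoped Norms.Frobenius

variable {N : ℕ}

lemma vecNorm2_eq_norm (X : Fin N → ℝ) : vecNorm2 X = ‖toLp 2 X‖ := by
  simp [vecNorm2, EuclideanSpace.norm_eq]

lemma frobNorm_eq_norm (A : Matrix (Fin N) (Fin N) ℝ) : frobNorm A = ‖A‖ := by
  simp [frobNorm, frobenius_norm_def, Real.sqrt_eq_rpow]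

lemma vecNorm2_nonneg (X : Fin N → ℝ) : 0 ≤ vecNorm2 X := Real.sqrt_nonneg _

lemma frobNorm_nonneg (A : Matrix (Fin N) (Fin N) ℝ) : 0 ≤ frobNorm A := Real.sqrt_nonneg _

lemma vecNorm2_mulVec_le (A : Matrix (Fin N) (Fin N) ℝ) (X : Fin N → ℝ) :
    vecNorm2 (A *ᵥ X) ≤ frobNorm A * vecNorm2 X := by
  simpa only [vecNorm2_eq_norm, frobNorm_eq_norm, ← frobenius_norm_replicateCol (ι := Unit),
    ← replicateCol_mulVec] using frobenius_norm_mul A (replicateCol Unit X)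

lemma abs_dotProduct_le (X Y : Fin N → ℝ) : |X ⬝ᵥ Y| ≤ vecNorm2 X * vecNorm2 Y := by
  simpa [vecNorm2_eq_norm, EuclideanSpace.inner_eq_star_dotProduct, dotProduct_comm]
    using abs_real_inner_le_norm (toLp 2 X) (toLp 2 Y)

lemma vecNorm2_add_le (X Y : Fin N → ℝ) : vecNorm2 (X + Y) ≤ vecNorm2 X + vecNorm2 Y := by
  simpa only [vecNorm2_eq_norm, toLp_add] using norm_add_le (toLp 2 X) (toLp 2 Y)

lemma vecNorm2_le_sum_abs (X : Fin N → ℝ) : vecNorm2 X ≤ ∑ m, |X m| := by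
  calc vecNorm2 X = ‖∑ m, EuclideanSpace.single m (X m)‖ := by
        rw [vecNorm2_eq_norm]
        congr 1
        ext i
        simp
    _ ≤ ∑ m, ‖EuclideanSpace.single m (X m)‖ := norm_sum_le _ _
    _ = ∑ m, |X m| := by simp only [PiLp.norm_single, Real.norm_eq_abs]

lemma vecNorm2_add_smul_mulVec_sum_le {ι : Type*} (X : Fin N → ℝ) {c : ℝ} (hc : 0 ≤ c)
    (A : Matrix (Fin N) (Fin N) ℝ) (s : Finset ι) (Y : ι → Fin N → ℝ) :
    vecNorm2 (X + c • A *ᵥ ∑ k ∈ s, Y k) ≤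
      vecNorm2 X + c * frobNorm A * ∑ k ∈ s, vecNorm2 (Y k) := by
  have hsum : vecNorm2 (∑ k ∈ s, Y k) ≤ ∑ k ∈ s, vecNorm2 (Y k) := by
    simpa only [vecNorm2_eq_norm, toLp_sum] using norm_sum_le s (fun k => toLp 2 (Y k))
  have hsmul : vecNorm2 (c • A *ᵥ ∑ k ∈ s, Y k) = c * vecNorm2 (A *ᵥ ∑ k ∈ s, Y k) := by
    rw [vecNorm2_eq_norm, vecNorm2_eq_norm, toLp_smul, norm_smul, Real.norm_of_nonneg hc]
  calc _ ≤ vecNorm2 X + c * vecNorm2 (A *ᵥ ∑ k ∈ s, Y k) := hsmul ▸ vecNorm2_add_le _ _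
    _ ≤ vecNorm2 X + c * (frobNorm A * ∑ k ∈ s, vecNorm2 (Y k)) := by
        gcongr
        exact (vecNorm2_mulVec_le _ _).trans
          (mul_le_mul_of_nonneg_left hsum (frobNorm_nonneg A))
    _ = _ := by ring

lemma vecNorm2_mulVec_add_quadratic_le (K : Matrix (Fin N) (Fin N) ℝ)
    (G : Fin N → Matrix (Fin N) (Fin N) ℝ) (W : Fin N → ℝ) :
    vecNorm2 (K *ᵥ W + fun m => W ⬝ᵥ G m *ᵥ W) ≤
      (frobNorm K + ∑ m, frobNorm (G m)) * (vecNorm2 W + vecNorm2 W ^ 2) := by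
  set x := vecNorm2 W
  have hx : 0 ≤ x := vecNorm2_nonneg W
  have hquad : vecNorm2 (fun m => W ⬝ᵥ G m *ᵥ W) ≤ (∑ m, frobNorm (G m)) * x ^ 2 := by
    calc _ ≤ ∑ m, |W ⬝ᵥ G m *ᵥ W| := vecNorm2_le_sum_abs _
      _ ≤ ∑ m, x * (frobNorm (G m) * x) := by
        gcongr with m
        exact (abs_dotProduct_le _ _).trans (by gcongr; exact vecNorm2_mulVec_le _ _)
      _ = _ := by rw [Finset.sum_mul]; exact Finset.sum_congr rfl fun m _ => by ring
  have hlin := vecNorm2_add_le (K *ᵥ W) (fun m => W ⬝ᵥ G m *ᵥ W)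
  have := vecNorm2_mulVec_le K W
  have hK := frobNorm_nonneg K
  have hG : 0 ≤ ∑ m, frobNorm (G m) := Finset.sum_nonneg fun m _ => frobNorm_nonneg _
  nlinarith [mul_nonneg hK (sq_nonneg x), mul_nonneg hG hx]

end EuclideanBounds

lemma div_one_add_le_div_one_add {a b : ℝ} (ha : 0 ≤ a) (hab : a ≤ b) :
    a / (1 + a) ≤ b / (1 + b) := by
  rw [div_le_div_iff₀ (by linarith) (by linarith)]
  linarith

/-- One step of the Ou-Iang argument: the growth `v ≤ u (1 + q (1 + u))` allowed by a
quadratic right-hand side costs only a factor `1 + q` in `u / (1 + u)`. -/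
lemma div_one_add_le_mul_one_add {u v q : ℝ} (hu : 0 ≤ u) (hq : 0 ≤ q) (hv : 0 ≤ v)
    (huv : v ≤ u * (1 + q * (1 + u))) : v / (1 + v) ≤ u / (1 + u) * (1 + q) := by
  refine (div_one_add_le_div_one_add hv huv).trans ?_
  rw [div_mul_eq_mul_div, div_le_div_iff₀ (by positivity) (by positivity)]
  nlinarith [mul_nonneg (mul_nonneg hq hq) (mul_nonneg hu (by positivity : (0:ℝ) ≤ 1 + u))]

/-- Discrete Gronwall–Bellman–Ou-Iang inequality for a quadratic right-hand side. -/
theorem div_one_add_le_of_le_add_sum_mul_add_sq {C : ℝ} {x q : ℕ → ℝ}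
    (hx : ∀ k, 0 ≤ x k) (hq : ∀ k, 0 ≤ q k)
    (hX : ∀ k, x k ≤ C + ∑ i ∈ Finset.range k, q i * (x i + x i ^ 2)) (k : ℕ) :
    x k / (1 + x k) ≤ C / (1 + C) * Real.exp (∑ i ∈ Finset.range k, q i) := by
  set u : ℕ → ℝ := fun k => C + ∑ i ∈ Finset.range k, q i * (x i + x i ^ 2)
  have hC : 0 ≤ C := by simpa [u] using (hx 0).trans (hX 0)
  have hu : ∀ k, 0 ≤ u k := fun k =>
    add_nonneg hC <| Finset.sum_nonneg fun i _ =>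
      mul_nonneg (hq i) (add_nonneg (hx i) (sq_nonneg _))
  refine (div_one_add_le_div_one_add (hx k) (hX k)).trans ?_
  induction k with
  | zero => simp
  | succ k ih =>
    have hstep : u (k + 1) ≤ u k * (1 + q k * (1 + u k)) := by
      have hxu : x k + x k ^ 2 ≤ u k + u k ^ 2 := by nlinarith [hx k, hX k]
      have := mul_le_mul_of_nonneg_left hxu (hq k)
      simp only [u, Finset.sum_range_succ] at this ⊢
      nlinarith
    calc u (k + 1) / (1 + u (k + 1)) ≤ u k / (1 + u k) * (1 + q k) :=
          div_one_add_le_mul_one_add (hu k) (hq k) (hu (k + 1)) hstep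
      _ ≤ C / (1 + C) * Real.exp (∑ i ∈ Finset.range k, q i) * Real.exp (q k) := by
          gcongr
          · exact add_nonneg zero_le_one (hq k)
          · linarith [Real.add_one_le_exp (q k)]
      _ = C / (1 + C) * Real.exp (∑ i ∈ Finset.range (k + 1), q i) := by
          rw [Finset.sum_range_succ, Real.exp_add, mul_assoc]

theorem le_two_mul_of_le_add_sum_mul_add_sq {C : ℝ} {x q : ℕ → ℝ}
    (hx : ∀ k, 0 ≤ x k) (hq : ∀ k, 0 ≤ q k)
    (hX : ∀ k, x k ≤ C + ∑ i ∈ Finset.range k, q i * (x i + x i ^ 2))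
    (hQ : ∀ k, ∑ i ∈ Finset.range k, q i ≤ Real.log ((C + 1) / (C + 1 / 2))) (k : ℕ) :
    x k ≤ 2 * C := by
  have hC : 0 ≤ C := (hx 0).trans (by simpa using hX 0)
  have hexp : Real.exp (∑ i ∈ Finset.range k, q i) ≤ (C + 1) / (C + 1 / 2) :=
    (Real.le_log_iff_exp_le (by positivity)).mp (hQ k)
  have hbound : x k / (1 + x k) ≤ C / (C + 1 / 2) :=
    calc x k / (1 + x k) ≤ C / (1 + C) * Real.exp (∑ i ∈ Finset.range k, q i) :=
          div_one_add_le_of_le_add_sum_mul_add_sq hx hq hX k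
      _ ≤ C / (1 + C) * ((C + 1) / (C + 1 / 2)) := by gcongr
      _ = C / (C + 1 / 2) := by field_simp; ring
  rw [div_le_div_iff₀ (by linarith [hx k]) (by positivity)] at hbound
  linarith

lemma eq_add_smul_mulVec_sum_along_characteristic {N : ℕ} {Δt : ℝ}
    {Sinv : Matrix (Fin N) (Fin N) ℝ} {F : ℕ → ℕ → (Fin N → ℝ) → (Fin N → ℝ)}
    {V : ℕ → ℕ → Fin N → ℝ}
    (hrec : ∀ i j, 1 ≤ j → j ≤ i →
      V i j = V (i - j) 0 +
        Δt • Sinv.mulVec (∑ k ∈ Finset.range j, F (k + (i - j)) k (V (k + (i - j)) k)))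
    (d k : ℕ) :
    V (k + d) k = V d 0 + Δt • Sinv *ᵥ ∑ l ∈ Finset.range k, F (l + d) l (V (l + d) l) := by
  rcases Nat.eq_zero_or_pos k with rfl | hk
  · simp
  · simpa using hrec (k + d) k hk (Nat.le_add_right k d)

lemma sum_range_diag_le_sum_range_sum_range {P : ℕ → ℕ → ℝ} (hP : ∀ a b, 0 ≤ P a b)
    (d k : ℕ) :
    ∑ l ∈ Finset.range k, P (l + d) l ≤
      ∑ a ∈ Finset.range (k + d + 1), ∑ b ∈ Finset.range (k + 1), P a b := by
  rw [Finset.sum_comm]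
  calc ∑ l ∈ Finset.range k, P (l + d) l ≤ ∑ b ∈ Finset.range (k + 1), P (b + d) b :=
        Finset.sum_le_sum_of_subset_of_nonneg (Finset.range_subset_range.mpr k.le_succ)
          fun l _ _ => hP _ _
    _ ≤ _ := Finset.sum_le_sum fun b hb => Finset.single_le_sum (fun a _ => hP a b)
          (Finset.mem_range.mpr (by rw [Finset.mem_range] at hb; omega))

/-- `V i j` stands for `Vⱼⁱ` (time level `i`, age level `j`); `K i j`, `G i j m`, `F i j` and
`P i j` are the data of step `(i, j)`. -/
theorem fourier_klibanov_scheme_stability_general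
    (N : ℕ)
    (Sinv : Matrix (Fin N) (Fin N) ℝ)
    (Δt : ℝ) (hΔt : 0 < Δt)
    (K : ℕ → ℕ → Matrix (Fin N) (Fin N) ℝ)
    (G : ℕ → ℕ → Fin N → Matrix (Fin N) (Fin N) ℝ)
    (F : ℕ → ℕ → (Fin N → ℝ) → (Fin N → ℝ))
    (hF : ∀ i j V m, F i j V m = (K i j).mulVec V m + V ⬝ᵥ (G i j m).mulVec V)
    (P : ℕ → ℕ → ℝ)
    (hP : ∀ i j, frobNorm (K i j) + ∑ m, frobNorm (G i j m) ≤ P i j)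
    (C : ℝ)
    (V : ℕ → ℕ → Fin N → ℝ)
    (hdata0 : ∀ i, vecNorm2 (V i 0) ≤ C)
    (hrec : ∀ i j, 1 ≤ j → j ≤ i →
      V i j = V (i - j) 0 +
        Δt • Sinv.mulVec (∑ k ∈ Finset.range j, F (k + (i - j)) k (V (k + (i - j)) k)))
    (hsmall : ∀ i j,
      Δt * frobNorm Sinv * ∑ a ∈ Finset.range (i + 1), ∑ b ∈ Finset.range (j + 1), P a b ≤
        Real.log ((C + 1) / (C + 1 / 2))) :
    ∀ i j, j ≤ i → vecNorm2 (V i j) ≤ 2 * C := by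
  have hPnn : ∀ a b, 0 ≤ P a b := fun a b => (add_nonneg (frobNorm_nonneg _)
    (Finset.sum_nonneg fun m _ => frobNorm_nonneg _)).trans (hP a b)
  have hFbound : ∀ a b W, vecNorm2 (F a b W) ≤ P a b * (vecNorm2 W + vecNorm2 W ^ 2) :=
    fun a b W => by
      rw [show F a b W = (K a b) *ᵥ W + fun m => W ⬝ᵥ (G a b m) *ᵥ W from funext (hF a b W)]
      exact (vecNorm2_mulVec_add_quadratic_le _ _ W).trans
        (mul_le_mul_of_nonneg_right (hP a b) (add_nonneg (vecNorm2_nonneg W) (sq_nonneg _)))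
  have hcoef : 0 ≤ Δt * frobNorm Sinv := mul_nonneg hΔt.le (frobNorm_nonneg Sinv)
  intro i j hji
  obtain ⟨d, rfl⟩ := Nat.exists_eq_add_of_le hji
  refine le_two_mul_of_le_add_sum_mul_add_sq (x := fun k => vecNorm2 (V (k + d) k))
    (q := fun k => Δt * frobNorm Sinv * P (k + d) k) (fun k => vecNorm2_nonneg _)
    (fun k => mul_nonneg hcoef (hPnn _ _)) (fun k => ?_) (fun k => ?_) j
  · rw [eq_add_smul_mulVec_sum_along_characteristic hrec d k]
    refine (vecNorm2_add_smul_mulVec_sum_le _ hΔt.le _ _ _).trans (add_le_add (hdata0 d) ?_)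
    rw [Finset.mul_sum]
    exact Finset.sum_le_sum fun l _ =>
      (mul_le_mul_of_nonneg_left (hFbound _ _ _) hcoef).trans_eq (mul_assoc _ _ _).symm
  · rw [← Finset.mul_sum]
    exact (mul_le_mul_of_nonneg_left (sum_range_diag_le_sum_range_sum_range hPnn d k)
      hcoef).trans (hsmall _ _)

/-- Stability of the explicit Fourier–Klibanov scheme.  Here `V i j` denotes
`Vⱼⁱ` (time level `i`, age level `j`), `K i j` and `G i j m` are the
step-dependent matrices, `F i j` the nonlinear map at step `(i,j)`, and
`P i j ≥ 0` the per-step bounds. -/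
theorem fourier_klibanov_scheme_stability
    (N : ℕ) (hN : 1 ≤ N)
    (S Sinv : Matrix (Fin N) (Fin N) ℝ)
    (hS : S * Sinv = 1) (hS' : Sinv * S = 1)
    (Δt : ℝ) (hΔt : 0 < Δt)
    (K : ℕ → ℕ → Matrix (Fin N) (Fin N) ℝ)
    (G : ℕ → ℕ → Fin N → Matrix (Fin N) (Fin N) ℝ)
    (F : ℕ → ℕ → (Fin N → ℝ) → (Fin N → ℝ))
    (hF : ∀ i j V m, F i j V m = (K i j).mulVec V m + V ⬝ᵥ (G i j m).mulVec V)
    (P : ℕ → ℕ → ℝ) (hPnn : ∀ i j, 0 ≤ P i j)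
    (hP : ∀ i j, frobNorm (K i j) + ∑ m, frobNorm (G i j m) ≤ P i j)
    (C : ℝ) (hC : 0 < C)
    (V : ℕ → ℕ → Fin N → ℝ)
    (hdata0 : ∀ i, vecNorm2 (V i 0) ≤ C)
    (hdata1 : ∀ j, vecNorm2 (V 0 j) ≤ C)
    (hrec : ∀ i j, 1 ≤ j → j ≤ i →
      V i j = V (i - j) 0 +
        Δt • Sinv.mulVec (∑ k ∈ Finset.range j, F (k + (i - j)) k (V (k + (i - j)) k)))
    (hsmall : ∀ i j,
      Δt * frobNorm Sinv * ∑ a ∈ Finset.range (i + 1), ∑ b ∈ Finset.range (j + 1), P a b ≤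
        Real.log ((C + 1) / (C + 1 / 2))) :
    ∀ i j, j ≤ i → vecNorm2 (V i j) ≤ 2 * C :=
  fourier_klibanov_scheme_stability_general N Sinv Δt hΔt K G F hF P hP C V hdata0 hrec hsmall
end
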